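/- For n ≥ 4, the set of order-preserving partial bijections of {1,...,n} that are restrictions of elements of the dihedral group D_{2n} = {g^k, h g^k : 0 ≤ k ≤ n-1} forms an inverse submonoid of the symmetric inverse monoid I_n, i.e., it is closed under composition, contains the identity, and is closed under inversion. -/

import Mathlib

/-- Powers in the symmetric inverse monoid (left-to-right composition). -/
def dPow (f : PartialEquiv ℕ ℕ) : ℕ → PartialEquiv ℕ ℕ
  | 0 => PartialEquiv.refl ℕ
  | k + 1 => (dPow f k).trans f

/-- The partial identity `e_j` on `{1,…,n} \ {j}`. -/
def dE (n j : ℕ) : PartialEquiv ℕ ℕ := PartialEquiv.ofSet (Set.Icc 1 n \ {j})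

/-- The `n`-cycle `g : i ↦ i+1 (mod n)` on `{1,…,n}`. -/
def dCyc (n : ℕ) : PartialEquiv ℕ ℕ where
  toFun k := if k = n then 1 else k + 1
  invFun k := if k = 1 then n else k - 1
  source := Set.Icc 1 n
  target := Set.Icc 1 n
  map_source' := by
    intro k hk
    simp only [Set.mem_Icc] at *
    split_ifs <;> omega
  map_target' := by
    intro k hk
    simp only [Set.mem_Icc] at *
    split_ifs <;> omega
  left_inv' := by
    intro k hk
    simp only [Set.mem_Icc] at hk
    split_ifs <;> omega
  right_inv' := by
    intro k hk
    simp only [Set.mem_Icc] at hk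
    split_ifs <;> omega

/-- The reversal `h : k ↦ n+1-k` on `{1,…,n}`. -/
def dRev (n : ℕ) : PartialEquiv ℕ ℕ where
  toFun k := n + 1 - k
  invFun k := n + 1 - k
  source := Set.Icc 1 n
  target := Set.Icc 1 n
  map_source' := by
    intro k hk; simp only [Set.mem_Icc] at *; omega
  map_target' := by
    intro k hk; simp only [Set.mem_Icc] at *; omega
  left_inv' := by
    intro k hk; simp only [Set.mem_Icc] at hk; omega
  right_inv' := by
    intro k hk; simp only [Set.mem_Icc] at hk; omega

/-- The partial shift `x : j ↦ j+1` with domain `{1,…,n-1}`. -/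
def dShift (n : ℕ) : PartialEquiv ℕ ℕ where
  toFun k := k + 1
  invFun k := k - 1
  source := Set.Icc 1 (n - 1)
  target := Set.Icc 2 n
  map_source' := by
    intro k hk; simp only [Set.mem_Icc] at *; omega
  map_target' := by
    intro k hk; simp only [Set.mem_Icc] at *; omega
  left_inv' := by
    intro k hk; simp only [Set.mem_Icc] at hk; omega
  right_inv' := by
    intro k hk; simp only [Set.mem_Icc] at hk; omega

/-- The rank-2 partial bijection `x_i` with domain `{1, 1+i}`, sending
`1 ↦ 1` and `1+i ↦ n-i+1`. -/
def dXi (n i : ℕ) (h1 : 1 ≤ i) (h2 : i < n) : PartialEquiv ℕ ℕ where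
  toFun k := if k = 1 then 1 else n - i + 1
  invFun k := if k = 1 then 1 else 1 + i
  source := {1, 1 + i}
  target := {1, n - i + 1}
  map_source' := by
    intro k _
    split_ifs <;> simp
  map_target' := by
    intro k _
    split_ifs <;> simp
  left_inv' := by
    intro k hk
    simp only [Set.mem_insert_iff, Set.mem_singleton_iff] at hk
    rcases hk with rfl | rfl <;> (split_ifs <;> omega)
  right_inv' := by
    intro k hk
    simp only [Set.mem_insert_iff, Set.mem_singleton_iff] at hk
    rcases hk with rfl | rfl <;> (split_ifs <;> omega)

/-- `ODI_n`: the order-preserving partial bijections of `{1,…,n}` which are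
restrictions of elements `g^k` or `h g^k` of the dihedral group. -/
def ODI (n : ℕ) : Set (PartialEquiv ℕ ℕ) :=
  {α | α.source ⊆ Set.Icc 1 n ∧
    (∀ u ∈ α.source, ∀ v ∈ α.source, u ≤ v → α u ≤ α v) ∧
    ∃ k : ℕ, Set.EqOn (↑α) (↑(dPow (dCyc n) k)) α.source ∨
      Set.EqOn (↑α) (↑((dRev n).trans (dPow (dCyc n) k))) α.source}

/-!
Read modulo `n`, the rotation `g^k` is `x ↦ x + k` and the reflection `h g^k` is
`x ↦ -x + (k + 1)`. Since `{1,…,n}` is a system of representatives of `ZMod n`, a partial map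
into `{1,…,n}` is a restriction of a dihedral element exactly when it agrees modulo `n` with an
affine map `x ↦ ±x + c`, and such maps are closed under composition and inversion. Order
preservation passes to composites, and to inverses because a monotone injection of a chain is
strictly monotone.
-/

open Set

section Dihedral

variable {n : ℕ}

theorem natCast_dCyc_apply (x : ℕ) : (dCyc n x : ZMod n) = x + 1 := by
  change ((if x = n then 1 else x + 1 : ℕ) : ZMod n) = x + 1
  split_ifs with h
  · simp [h]
  · push_cast; rfl

theorem mapsTo_dPow_dCyc (k : ℕ) : MapsTo (dPow (dCyc n) k) (Icc 1 n) (Icc 1 n) := by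
  induction k with
  | zero => exact mapsTo_id _
  | succ k ih => exact (dCyc n).mapsTo.comp ih

theorem natCast_dPow_dCyc_apply (x k : ℕ) :
    (dPow (dCyc n) k x : ZMod n) = x + k := by
  induction k with
  | zero => simp [dPow]
  | succ k ih =>
    change (dCyc n (dPow (dCyc n) k x) : ZMod n) = _
    rw [natCast_dCyc_apply, ih]
    push_cast
    ring

theorem natCast_dRev_apply {x : ℕ} (hx : x ≤ n + 1) : (dRev n x : ZMod n) = 1 - x := by
  change ((n + 1 - x : ℕ) : ZMod n) = 1 - x
  rw [Nat.cast_sub hx]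
  simp

theorem mapsTo_dRev_trans_dPow_dCyc (k : ℕ) :
    MapsTo ((dRev n).trans (dPow (dCyc n) k)) (Icc 1 n) (Icc 1 n) :=
  (mapsTo_dPow_dCyc k).comp (dRev n).mapsTo

theorem natCast_dRev_trans_dPow_dCyc_apply {x : ℕ} (hx : x ∈ Icc 1 n) (k : ℕ) :
    ((dRev n).trans (dPow (dCyc n) k) x : ZMod n) = -x + (k + 1) := by
  change (dPow (dCyc n) k (dRev n x) : ZMod n) = _
  rw [natCast_dPow_dCyc_apply, natCast_dRev_apply (hx.2.trans n.le_succ)]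
  ring

theorem eq_of_natCast_eq {x y : ℕ} (hx : x ∈ Icc 1 n) (hy : y ∈ Icc 1 n)
    (h : (x : ZMod n) = y) : x = y := by
  obtain ⟨hx1, hxn⟩ := hx
  obtain ⟨hy1, hyn⟩ := hy
  have hmod : (x - 1) % n = (y - 1) % n := by
    rw [← ZMod.natCast_eq_natCast_iff', Nat.cast_sub hx1, Nat.cast_sub hy1, h]
  rw [Nat.mod_eq_of_lt (by omega), Nat.mod_eq_of_lt (by omega)] at hmod
  omega

def IsDihedralModOn (n : ℕ) (f : ℕ → ℕ) (s : Set ℕ) : Prop :=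
  ∃ (ε : ℤˣ) (c : ZMod n), ∀ x ∈ s, (f x : ZMod n) = ((ε : ℤ) : ZMod n) * x + c

theorem IsDihedralModOn.mono {f : ℕ → ℕ} {s t : Set ℕ} (h : IsDihedralModOn n f t)
    (hst : s ⊆ t) : IsDihedralModOn n f s :=
  let ⟨ε, c, hf⟩ := h
  ⟨ε, c, fun x hx => hf x (hst hx)⟩

theorem IsDihedralModOn.congr {f g : ℕ → ℕ} {s : Set ℕ} (h : IsDihedralModOn n f s)
    (hfg : EqOn f g s) : IsDihedralModOn n g s :=
  let ⟨ε, c, hf⟩ := h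
  ⟨ε, c, fun x hx => hfg hx ▸ hf x hx⟩

theorem IsDihedralModOn.comp {f g : ℕ → ℕ} {s t : Set ℕ} (hg : IsDihedralModOn n g t)
    (hf : IsDihedralModOn n f s) (hst : MapsTo f s t) : IsDihedralModOn n (g ∘ f) s := by
  obtain ⟨ε, c, hf⟩ := hf
  obtain ⟨δ, d, hg⟩ := hg
  refine ⟨δ * ε, δ * c + d, fun x hx => ?_⟩
  rw [Function.comp_apply, hg _ (hst hx), hf x hx]
  push_cast
  ring

theorem IsDihedralModOn.of_leftInvOn {f g : ℕ → ℕ} {s t : Set ℕ} (hf : IsDihedralModOn n f s)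
    (hg : MapsTo g t s) (hfg : LeftInvOn f g t) : IsDihedralModOn n g t := by
  obtain ⟨ε, c, hf⟩ := hf
  refine ⟨ε, -(ε * c), fun y hy => ?_⟩
  have hε : ((ε : ℤ) : ZMod n) * (ε : ℤ) = 1 := by
    rw [← Int.cast_mul, ← Units.val_mul, Int.units_mul_self, Units.val_one, Int.cast_one]
  calc (g y : ZMod n) = (ε : ℤ) * ((ε : ℤ) * g y + c) - (ε : ℤ) * c := by
        rw [mul_add, ← mul_assoc, hε]; ring
    _ = (ε : ℤ) * y + -(ε * c) := by rw [← hf _ (hg hy), hfg hy]; ring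

theorem isDihedralModOn_dPow_dCyc (s : Set ℕ) (k : ℕ) :
    IsDihedralModOn n (dPow (dCyc n) k) s :=
  ⟨1, k, fun x _ => by rw [natCast_dPow_dCyc_apply]; simp⟩

theorem isDihedralModOn_dRev_trans_dPow_dCyc {s : Set ℕ} (hs : s ⊆ Icc 1 n) (k : ℕ) :
    IsDihedralModOn n ((dRev n).trans (dPow (dCyc n) k)) s :=
  ⟨-1, k + 1, fun x hx => by rw [natCast_dRev_trans_dPow_dCyc_apply (hs hx)]; simp⟩

theorem exists_dihedral_eqOn_iff {f : ℕ → ℕ} {s : Set ℕ} (hs : s ⊆ Icc 1 n) :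
    (∃ k : ℕ, EqOn f (dPow (dCyc n) k) s ∨ EqOn f ((dRev n).trans (dPow (dCyc n) k)) s) ↔
      MapsTo f s (Icc 1 n) ∧ IsDihedralModOn n f s := by
  constructor
  · rintro ⟨k, hk | hk⟩
    · exact ⟨((mapsTo_dPow_dCyc k).mono_left hs).congr hk.symm,
        (isDihedralModOn_dPow_dCyc s k).congr hk.symm⟩
    · exact ⟨((mapsTo_dRev_trans_dPow_dCyc k).mono_left hs).congr hk.symm,
        (isDihedralModOn_dRev_trans_dPow_dCyc hs k).congr hk.symm⟩
  rintro ⟨hf, ε, c, hfc⟩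
  rcases s.eq_empty_or_nonempty with rfl | ⟨x₀, hx₀⟩
  · exact ⟨0, Or.inl (eqOn_empty _ _)⟩
  have : NeZero n := ⟨by grind [hs hx₀]⟩
  rcases Int.units_eq_one_or ε with rfl | rfl
  · refine ⟨c.val, Or.inl fun x hx =>
      eq_of_natCast_eq (hf hx) (mapsTo_dPow_dCyc _ (hs hx)) ?_⟩
    rw [hfc x hx, natCast_dPow_dCyc_apply, ZMod.natCast_zmod_val]
    simp
  · refine ⟨(c - 1).val, Or.inr fun x hx =>
      eq_of_natCast_eq (hf hx) (mapsTo_dRev_trans_dPow_dCyc _ (hs hx)) ?_⟩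
    rw [hfc x hx, natCast_dRev_trans_dPow_dCyc_apply (hs hx), ZMod.natCast_zmod_val]
    simp

theorem mem_ODI_iff {α : PartialEquiv ℕ ℕ} :
    α ∈ ODI n ↔ α.source ⊆ Icc 1 n ∧ MonotoneOn α α.source ∧
      MapsTo α α.source (Icc 1 n) ∧ IsDihedralModOn n α α.source :=
  and_congr_right fun hs => and_congr Iff.rfl (exists_dihedral_eqOn_iff hs)

theorem trans_mem_ODI {α β : PartialEquiv ℕ ℕ} (hα : α ∈ ODI n) (hβ : β ∈ ODI n) :
    α.trans β ∈ ODI n := by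
  obtain ⟨hαs, hαm, -, hαd⟩ := mem_ODI_iff.mp hα
  obtain ⟨-, hβm, hβmaps, hβd⟩ := mem_ODI_iff.mp hβ
  have hsub : (α.trans β).source ⊆ α.source := by
    rw [PartialEquiv.trans_source]
    exact inter_subset_left
  have hmaps : MapsTo α (α.trans β).source β.source := by
    rw [PartialEquiv.trans_source]
    exact fun x hx => hx.2
  rw [mem_ODI_iff, PartialEquiv.coe_trans]
  exact ⟨hsub.trans hαs, hβm.comp (hαm.mono hsub) hmaps, hβmaps.comp hmaps,
    hβd.comp (hαd.mono hsub) hmaps⟩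

theorem symm_mem_ODI {α : PartialEquiv ℕ ℕ} (hα : α ∈ ODI n) : α.symm ∈ ODI n := by
  obtain ⟨hαs, hαm, hαmaps, hαd⟩ := mem_ODI_iff.mp hα
  have hstrict := hαm.strictMonoOn_of_injOn α.injOn
  rw [mem_ODI_iff, α.symm_source]
  refine ⟨α.image_source_eq_target ▸ hαmaps.image_subset, fun u hu v hv huv => ?_,
    α.mapsTo_symm.mono_right hαs, hαd.of_leftInvOn α.mapsTo_symm α.rightInvOn⟩
  exact (hstrict.le_iff_le (α.map_target hu) (α.map_target hv)).mp
    (by rwa [α.right_inv hu, α.right_inv hv])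

theorem ofSet_Icc_mem_ODI : PartialEquiv.ofSet (Icc 1 n) ∈ ODI n :=
  ⟨subset_rfl, fun _ _ _ _ h => h, 0, Or.inl fun _ _ => rfl⟩

end Dihedral

theorem stmt15_general (n : ℕ) :
    (∀ α ∈ ODI n, ∀ β ∈ ODI n, α.trans β ∈ ODI n) ∧
    PartialEquiv.ofSet (Set.Icc 1 n) ∈ ODI n ∧
    (∀ α ∈ ODI n, α.symm ∈ ODI n) :=
  ⟨fun _ hα _ hβ => trans_mem_ODI hα hβ, ofSet_Icc_mem_ODI, fun _ hα => symm_mem_ODI hα⟩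

/-- For `n ≥ 4`, `ODI_n` is an inverse submonoid of the symmetric inverse
monoid: closed under composition, containing the identity, and closed under
inversion. -/
theorem stmt15 (n : ℕ) (hn : 4 ≤ n) :
    (∀ α ∈ ODI n, ∀ β ∈ ODI n, α.trans β ∈ ODI n) ∧
    PartialEquiv.ofSet (Set.Icc 1 n) ∈ ODI n ∧
    (∀ α ∈ ODI n, α.symm ∈ ODI n) :=
  stmt15_general n
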